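/- arXiv:2603.07877 — 3 statements merged into one kernel-verified Lean document; each statement's English description precedes it below -/
import Mathlib

section
/- Jung's theorem: any compact set K ⊂ ℝ^{n} with diameter d is contained in a closed ball of radius r ≤ d·√(n/(2(n+1))). -/
/-!
Let `c` minimise `supDist c K`, the radius `r` of the smallest ball about `c` containing `K`.
Then `c` lies in the closed convex hull of the farthest points of `K`: otherwise a direction
separating `c` from that hull moves `c` closer to all farthest points at once and decreases `r`.
By Carathéodory, a point `p` of the hull is a barycentre `∑ wᵢ zᵢ` of at most `n + 1` farthest
points, and the variance identity `∑ᵢⱼ wᵢ wⱼ ‖zᵢ - zⱼ‖² = 2 (r² - ‖p - c‖²)`, together with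
`‖zᵢ - zⱼ‖ ≤ diam K` off the diagonal and `∑ wᵢ² ≥ 1 / (n + 1)`, gives
`r² - ‖p - c‖² ≤ (diam K)² n / (2 (n + 1))`. Letting `p → c` yields the bound.
-/

open Metric Finset RealInnerProductSpace Filter

-- Junk value `0` unless `s` is nonempty and bounded.
noncomputable def supDist {X : Type*} [PseudoMetricSpace X] (x : X) (s : Set X) : ℝ :=
  sSup ((dist · x) '' s)

section PseudoMetric

variable {X : Type*} [PseudoMetricSpace X] {s : Set X} {x y : X} {r : ℝ}

lemma dist_le_supDist (hs : Bornology.IsBounded s) (hy : y ∈ s) : dist y x ≤ supDist x s := by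
  obtain ⟨C, hC⟩ := hs.subset_closedBall x
  exact le_csSup ⟨C, Set.forall_mem_image.2 fun _ hz => hC hz⟩ ⟨y, hy, rfl⟩

lemma supDist_le (hne : s.Nonempty) (h : ∀ y ∈ s, dist y x ≤ r) : supDist x s ≤ r :=
  csSup_le (hne.image _) (Set.forall_mem_image.2 h)

lemma subset_closedBall_supDist (hs : Bornology.IsBounded s) : s ⊆ closedBall x (supDist x s) :=
  fun _ hy => dist_le_supDist hs hy

lemma IsCompact.exists_dist_eq_supDist (hs : IsCompact s) (hne : s.Nonempty) (x : X) :
    ∃ y ∈ s, dist y x = supDist x s := by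
  obtain ⟨y, hy, h⟩ :=
    hs.exists_sSup_image_eq hne (continuous_id.dist continuous_const).continuousOn
  exact ⟨y, hy, h.symm⟩

lemma lipschitzWith_supDist (hs : Bornology.IsBounded s) (hne : s.Nonempty) :
    LipschitzWith 1 (supDist · s) :=
  LipschitzWith.of_le_add fun x x' => supDist_le hne fun y hy =>
    (dist_triangle_right y x x').trans (add_le_add_left (dist_le_supDist hs hy) _)

lemma exists_forall_supDist_le [ProperSpace X] (hs : Bornology.IsBounded s) (hne : s.Nonempty) :
    ∃ x, ∀ x', supDist x s ≤ supDist x' s := by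
  obtain ⟨y, hy⟩ := hne
  have : Nonempty X := ⟨y⟩
  exact (lipschitzWith_supDist hs ⟨y, hy⟩).continuous.exists_forall_le <|
    tendsto_atTop_mono (fun _ => dist_le_supDist hs hy) (tendsto_dist_left_cocompact_atTop y)

lemma sum_sum_mul_dist_sq_le {ι : Type*} [Fintype ι] {z : ι → X} {w : ι → ℝ} {d k : ℝ}
    (hw₀ : ∀ i, 0 ≤ w i) (hw₁ : ∑ i, w i = 1) (hd : ∀ i j, dist (z i) (z j) ≤ d)
    (hk : Fintype.card ι ≤ k) :
    ∑ i, ∑ j, w i * w j * dist (z i) (z j) ^ 2 ≤ d ^ 2 * (1 - k⁻¹) := by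
  classical
  have hoffdiag : ∀ i j, w i * w j * dist (z i) (z j) ^ 2
      ≤ w i * w j * d ^ 2 - if i = j then w i * w j * d ^ 2 else 0 := by
    intro i j
    split_ifs with hij
    · simp [hij]
    · rw [sub_zero]
      exact mul_le_mul_of_nonneg_left (pow_le_pow_left₀ dist_nonneg (hd i j) 2)
        (mul_nonneg (hw₀ i) (hw₀ j))
  have hsum : ∑ i, ∑ j, (w i * w j * d ^ 2 - if i = j then w i * w j * d ^ 2 else 0)
      = d ^ 2 * (1 - ∑ i, w i ^ 2) := by
    simp only [sum_sub_distrib, sum_ite_eq, mem_univ, if_true, ← sum_mul, ← sum_mul_sum, hw₁, ← sq]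
    ring
  have hcard : 0 < (Fintype.card ι : ℝ) := by
    have : Nonempty ι := by
      by_contra h
      simp [not_nonempty_iff.1 h] at hw₁
    exact_mod_cast Fintype.card_pos
  have hcs : (Fintype.card ι : ℝ)⁻¹ ≤ ∑ i, w i ^ 2 := by
    rw [inv_le_iff_one_le_mul₀' hcard]
    simpa [hw₁] using sq_sum_le_card_mul_sum_sq (s := univ) (f := w)
  have hk' : k⁻¹ ≤ ∑ i, w i ^ 2 := (inv_anti₀ hcard hk).trans hcs
  calc _ ≤ _ := sum_le_sum fun i _ => sum_le_sum fun j _ => hoffdiag i j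
    _ = _ := hsum
    _ ≤ _ := by gcongr

end PseudoMetric

section InnerProduct

variable {E : Type*} [NormedAddCommGroup E] [InnerProductSpace ℝ E]

lemma sum_sum_mul_norm_sub_sq {ι : Type*} [Fintype ι] (u : ι → E) {w : ι → ℝ}
    (hw₁ : ∑ i, w i = 1) :
    ∑ i, ∑ j, w i * w j * ‖u i - u j‖ ^ 2
      = 2 * (∑ i, w i * ‖u i‖ ^ 2 - ‖∑ i, w i • u i‖ ^ 2) := by
  have hmean : ‖∑ i, w i • u i‖ ^ 2 = ∑ i, ∑ j, w i * w j * ⟪u i, u j⟫ := by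
    simp_rw [← real_inner_self_eq_norm_sq, sum_inner, inner_sum, real_inner_smul_left,
      real_inner_smul_right, mul_assoc]
  simp only [hmean, norm_sub_sq_real, mul_sub, mul_add, sum_add_distrib, sum_sub_distrib,
    ← sum_mul, ← mul_sum, hw₁]
  have hcross : ∑ i, ∑ j, w i * w j * ‖u j‖ ^ 2 = ∑ j, w j * ‖u j‖ ^ 2 := by
    simp_rw [mul_assoc, ← mul_sum, ← sum_mul, hw₁, one_mul]
  rw [hcross]
  simp only [mul_one, mul_left_comm _ (2 : ℝ), ← mul_sum]
  ring

lemma sq_sub_dist_sq_le_of_mem_convexHull [FiniteDimensional ℝ E] {s : Set E} {c p : E}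
    {r d : ℝ} (hp : p ∈ convexHull ℝ s) (hs : s ⊆ sphere c r)
    (hd : ∀ y ∈ s, ∀ z ∈ s, dist y z ≤ d) :
    r ^ 2 - dist p c ^ 2 ≤ d ^ 2 * (Module.finrank ℝ E / (2 * (Module.finrank ℝ E + 1))) := by
  obtain ⟨ι, _, z, w, hzs, hz, hw₀, hw₁, hwz⟩ := eq_pos_convex_span_of_mem_convexHull hp
  have hzc : ∀ i, ‖z i - c‖ = r := fun i => mem_sphere_iff_norm.1 (hs (hzs ⟨i, rfl⟩))
  have hpc : ∑ i, w i • (z i - c) = p - c := by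
    simp only [smul_sub, sum_sub_distrib, ← sum_smul, hw₁, one_smul, hwz]
  have hvariance := sum_sum_mul_norm_sub_sq (fun i => z i - c) hw₁
  simp only [sub_sub_sub_cancel_right, hzc, ← sum_mul, hw₁, one_mul, hpc, ← dist_eq_norm]
    at hvariance
  have hcard : (Fintype.card ι : ℝ) ≤ Module.finrank ℝ E + 1 := by
    exact_mod_cast hz.card_le_finrank_succ.trans (Nat.add_le_add_right (Submodule.finrank_le _) 1)
  have hdiam := sum_sum_mul_dist_sq_le (z := z) (fun i => (hw₀ i).le) hw₁
    (fun i j => hd _ (hzs ⟨i, rfl⟩) _ (hzs ⟨j, rfl⟩)) hcard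
  have : d ^ 2 * (1 - ((Module.finrank ℝ E : ℝ) + 1)⁻¹)
      = 2 * (d ^ 2 * (Module.finrank ℝ E / (2 * (Module.finrank ℝ E + 1)))) := by
    field_simp
    ring
  linarith

variable {K : Set E}

lemma exists_supDist_lt_of_forall_inner_pos (hK : IsCompact K) (hne : K.Nonempty) {c v : E}
    (hv : ∀ y ∈ K, dist y c = supDist c K → 0 < ⟪y - c, v⟫) :
    ∃ c', supDist c' K < supDist c K := by
  set r := supDist c K
  -- By compactness, each point of `K` is either uniformly inside the ball or uniformly far
  -- ahead in direction `v`.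
  obtain ⟨η, hη, hgap⟩ : ∃ η > 0, ∀ x ∈ K, η ≤ r - dist x c ∨ η ≤ ⟪x - c, v⟫ := by
    obtain ⟨x₀, hx₀, hmin⟩ := hK.exists_isMinOn hne
      (f := fun x => max (r - dist x c) ⟪x - c, v⟫) (by fun_prop)
    refine ⟨_, ?_, fun x hx => le_max_iff.1 (hmin hx)⟩
    rcases (dist_le_supDist hK.isBounded hx₀ (x := c)).lt_or_eq with h | h
    · exact lt_max_of_lt_left (sub_pos.2 h)
    · exact lt_max_of_lt_right (hv x₀ hx₀ h)
  set t := η / (‖v‖ ^ 2 + ‖v‖ + 1)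
  have ht : 0 < t := by positivity
  have ht₁ : t * ‖v‖ < η := by
    rw [div_mul_eq_mul_div, div_lt_iff₀ (by positivity)]
    nlinarith [norm_nonneg v]
  have ht₂ : t * ‖v‖ ^ 2 < η := by
    rw [div_mul_eq_mul_div, div_lt_iff₀ (by positivity)]
    nlinarith [norm_nonneg v]
  refine ⟨c + t • v, ?_⟩
  obtain ⟨x, hx, hxeq⟩ := hK.exists_dist_eq_supDist hne (c + t • v)
  rw [← hxeq]
  have hxc : dist x c ≤ r := dist_le_supDist hK.isBounded hx
  rcases hgap x hx with hfar | hinner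
  · calc dist x (c + t • v) ≤ dist x c + dist c (c + t • v) := dist_triangle _ _ _
      _ = dist x c + t * ‖v‖ := by rw [dist_self_add_right, norm_smul, Real.norm_of_nonneg ht.le]
      _ < r := by linarith
  · refine lt_of_pow_lt_pow_left₀ 2 (dist_nonneg.trans hxc) ?_
    calc dist x (c + t • v) ^ 2 = dist x c ^ 2 - 2 * t * ⟪x - c, v⟫ + t * (t * ‖v‖ ^ 2) := by
          rw [dist_eq_norm, dist_eq_norm, ← sub_sub, norm_sub_sq_real, real_inner_smul_right,
            norm_smul, Real.norm_of_nonneg ht.le]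
          ring
      _ < r ^ 2 := by nlinarith [pow_le_pow_left₀ dist_nonneg hxc 2]

lemma mem_closure_convexHull_of_forall_supDist_le [CompleteSpace E] (hK : IsCompact K)
    (hne : K.Nonempty) {c : E} (hc : ∀ c', supDist c K ≤ supDist c' K) :
    c ∈ closure (convexHull ℝ {x ∈ K | dist x c = supDist c K}) := by
  by_contra h
  obtain ⟨f, u, hfc, hf⟩ :=
    geometric_hahn_banach_point_closed (convex_convexHull ℝ _).closure isClosed_closure h
  obtain ⟨c', hc'⟩ := exists_supDist_lt_of_forall_inner_pos hK hne
    (v := (InnerProductSpace.toDual ℝ E).symm f) fun y hy hyc => by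
      rw [real_inner_comm, InnerProductSpace.toDual_symm_apply, map_sub, sub_pos]
      exact hfc.trans (hf y (subset_closure (subset_convexHull ℝ _ ⟨hy, hyc⟩)))
  exact (hc c').not_gt hc'

theorem IsCompact.exists_subset_closedBall_diam_mul_sqrt [FiniteDimensional ℝ E]
    (hK : IsCompact K) (hne : K.Nonempty) :
    ∃ c : E, K ⊆ closedBall c
      (diam K * √(Module.finrank ℝ E / (2 * (Module.finrank ℝ E + 1)))) := by
  obtain ⟨c, hc⟩ := exists_forall_supDist_le hK.isBounded hne
  set r := supDist c K
  set a : ℝ := Module.finrank ℝ E / (2 * (Module.finrank ℝ E + 1))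
  have hhull :
      convexHull ℝ {x ∈ K | dist x c = r} ⊆ {p | r ^ 2 - dist p c ^ 2 ≤ diam K ^ 2 * a} :=
    fun p hp => sq_sub_dist_sq_le_of_mem_convexHull hp (fun x hx => hx.2)
      fun y hy z hz => dist_le_diam_of_mem hK.isBounded hy.1 hz.1
  have hr : r ^ 2 ≤ diam K ^ 2 * a := by
    simpa using closure_minimal hhull (isClosed_le (by fun_prop) continuous_const)
      (mem_closure_convexHull_of_forall_supDist_le hK hne hc)
  refine ⟨c, (subset_closedBall_supDist hK.isBounded).trans (closedBall_subset_closedBall ?_)⟩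
  calc r ≤ |r| := le_abs_self r
    _ ≤ √(diam K ^ 2 * a) := Real.abs_le_sqrt hr
    _ = diam K * √a := by rw [Real.sqrt_mul (sq_nonneg _), Real.sqrt_sq diam_nonneg]

end InnerProduct

theorem stmt4_general (n : ℕ) (K : Set (EuclideanSpace ℝ (Fin n)))
    (hKne : K.Nonempty) (hK : IsCompact K) (d : ℝ) (hd : d = Metric.diam K) :
    ∃ c : EuclideanSpace ℝ (Fin n),
      K ⊆ Metric.closedBall c (d * Real.sqrt (n / (2 * (n + 1)))) := by
  simpa [hd, finrank_euclideanSpace_fin] using hK.exists_subset_closedBall_diam_mul_sqrt hKne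

/-- Jung's theorem: any nonempty compact set `K ⊆ ℝ^n` of diameter `d` is contained in a
closed ball of radius `d·√(n/(2(n+1)))`. -/
theorem stmt4 (n : ℕ) (hn : 1 ≤ n) (K : Set (EuclideanSpace ℝ (Fin n)))
    (hKne : K.Nonempty) (hK : IsCompact K) (d : ℝ) (hd : d = Metric.diam K) :
    ∃ c : EuclideanSpace ℝ (Fin n),
      K ⊆ Metric.closedBall c (d * Real.sqrt (n / (2 * (n + 1)))) :=
  stmt4_general n K hKne hK d hd
end

section
/- Cone area bound: let B ⊂ ℝ^{N+1} be a compact set contained in the closed ball of radius h centered at the origin, with ℋ^l(B) < ∞. Define the cone V = {t·x : x ∈ B, t ∈ [0,1]}. Then ℋ^{l+1}(V) ≤ C·h·ℋ^l(B) for a constant C depending only l and N. -/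
/-!
Cover `B` at a small scale `r` by sets `Uᵢ` with `∑ (diam Uᵢ)^l ≈ ℋ^l(B)`, and pick
`ρᵢ ≤ r` slightly above `diam Uᵢ` (so that sets of diameter zero are not degenerate).
The part `[0,1] • Uᵢ` of the cone is cut radially into `n ≈ h/ρᵢ` bands `[j/n, (j+1)/n] • Uᵢ`;
each has diameter at most `ρᵢ + h/n ≤ 2ρᵢ`, so the bands contribute `≲ (h/ρᵢ) ρᵢ^(l+1) = h ρᵢ^l`
to the `(l+1)`-dimensional Hausdorff sum. Summing over `i` and letting `r → 0` gives
`ℋ^(l+1)(V) ≤ 2^(l+2) h ℋ^l(B)`.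
-/

open Metric MeasureTheory Set Filter Topology
open scoped ENNReal NNReal Pointwise

section HausdorffCover

variable {X : Type*} [EMetricSpace X] [MeasurableSpace X] [BorelSpace X] {d : ℝ} {S : Set X}
  {c : ℝ≥0∞}

theorem exists_cover_tsum_ediam_rpow_lt (hd : 0 < d) (hS : μH[d] S < c) {r : ℝ≥0∞}
    (hr : 0 < r) :
    ∃ t : ℕ → Set X, S ⊆ ⋃ n, t n ∧ (∀ n, ediam (t n) ≤ r) ∧ ∑' n, ediam (t n) ^ d < c := by
  rw [Measure.hausdorffMeasure_apply] at hS
  obtain ⟨t, hS⟩ := iInf_lt_iff.1 ((le_iSup₂ r hr).trans_lt hS)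
  obtain ⟨hSt, hS⟩ := iInf_lt_iff.1 hS
  obtain ⟨htr, hS⟩ := iInf_lt_iff.1 hS
  have hsupp (s : Set X) : (⨆ _ : s.Nonempty, ediam s ^ d) = ediam s ^ d := by
    rcases s.eq_empty_or_nonempty with rfl | hs
    · simp [hd]
    · exact iSup_pos hs
  simp only [hsupp] at hS
  exact ⟨t, hSt, htr, hS⟩

theorem hausdorffMeasure_le_of_forall_cover
    (h : ∀ r : ℝ, 0 < r → ∃ (ι : Type) (_ : Countable ι) (t : ι → Set X),
      S ⊆ ⋃ i, t i ∧ (∀ i, ediam (t i) ≤ ENNReal.ofReal r) ∧ ∑' i, ediam (t i) ^ d ≤ c) :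
    μH[d] S ≤ c := by
  choose ι hι t hcov hdiam hsum using fun n : ℕ => h (1 / (n + 1)) Nat.one_div_pos_of_nat
  have hr : Tendsto (fun n : ℕ => ENNReal.ofReal (1 / (n + 1))) atTop (𝓝 0) := by
    simpa using ENNReal.tendsto_ofReal tendsto_one_div_add_atTop_nhds_zero_nat
  calc μH[d] S ≤ liminf (fun n => ∑' i, ediam (t n i) ^ d) atTop :=
        Measure.hausdorffMeasure_le_liminf_tsum d S _ hr t (.of_forall hdiam) (.of_forall hcov)
    _ ≤ c := liminf_le_of_frequently_le' (.of_forall hsum)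

end HausdorffCover

theorem exists_dist_le_pow_le_ediam_pow_add {X : Type*} [PseudoMetricSpace X] {m : ℕ}
    (hm : m ≠ 0) {s : Set X} {r : ℝ} (hr : 0 < r) (hr1 : r ≤ 1) (hs : ediam s ≤ ENNReal.ofReal r)
    {η : ℝ≥0} (hη : 0 < η) :
    ∃ ρ, 0 < ρ ∧ ρ ≤ r ∧ (∀ x ∈ s, ∀ y ∈ s, dist x y ≤ ρ) ∧
      ENNReal.ofReal (ρ ^ m) ≤ ediam s ^ m + η := by
  have hfin : ediam s ≠ ⊤ := ne_top_of_le_ne_top ENNReal.ofReal_ne_top hs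
  have hsr : diam s ≤ r := ENNReal.toReal_le_of_le_ofReal hr.le hs
  set σ := min (η : ℝ) r
  have hσ : 0 < σ := lt_min hη hr
  refine ⟨max (diam s) σ, lt_max_of_lt_right hσ, max_le hsr (min_le_right _ _),
    fun x hx y hy => (dist_le_diam_of_mem' hfin hx hy).trans (le_max_left _ _), ?_⟩
  have hpow : max (diam s) σ ^ m ≤ diam s ^ m + η := by
    have hσm : σ ^ m ≤ η :=
      (pow_le_of_le_one hσ.le ((min_le_right _ _).trans hr1) hm).trans (min_le_left _ _)
    rcases le_total (diam s) σ with hle | hle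
    · rw [max_eq_right hle]; linarith [pow_nonneg (diam_nonneg (s := s)) m]
    · rw [max_eq_left hle]; linarith [η.coe_nonneg]
  calc ENNReal.ofReal (max (diam s) σ ^ m) ≤ ENNReal.ofReal (diam s ^ m + η) :=
        ENNReal.ofReal_le_ofReal hpow
    _ = ediam s ^ m + η := by
        rw [ENNReal.ofReal_add (by positivity) η.coe_nonneg, ENNReal.ofReal_pow diam_nonneg,
          diam, ENNReal.ofReal_toReal hfin, ENNReal.ofReal_coe_nnreal]

section Cone

variable {E : Type*} [NormedAddCommGroup E] [NormedSpace ℝ E]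

theorem dist_smul_smul_le (s t : ℝ) (x y : E) :
    dist (s • x) (t • y) ≤ |s| * dist x y + |s - t| * ‖y‖ := by
  rw [dist_eq_norm, dist_eq_norm,
    show s • x - t • y = s • (x - y) + (s - t) • y by rw [smul_sub, sub_smul]; abel]
  refine (norm_add_le _ _).trans_eq ?_
  rw [norm_smul, norm_smul, Real.norm_eq_abs, Real.norm_eq_abs]

theorem ediam_Icc_smul_le {a b h ρ : ℝ} {U : Set E} (ha : 0 ≤ a) (hb : b ≤ 1)
    (hU : U ⊆ closedBall 0 h) (hUρ : ∀ x ∈ U, ∀ y ∈ U, dist x y ≤ ρ) :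
    ediam (Icc a b • U) ≤ ENNReal.ofReal (ρ + (b - a) * h) := by
  refine ediam_le ?_
  rintro _ ⟨s, ⟨has, hsb⟩, x, hx, rfl⟩ _ ⟨t, ⟨hat, htb⟩, y, hy, rfl⟩
  rw [edist_dist]
  refine ENNReal.ofReal_le_ofReal ((dist_smul_smul_le s t x y).trans ?_)
  have hs : |s| ≤ 1 := abs_le.2 ⟨by linarith, by linarith⟩
  have hst : |s - t| ≤ b - a := abs_sub_le_iff.2 ⟨by linarith, by linarith⟩
  have hxy := hUρ x hx y hy
  have hyh : ‖y‖ ≤ h := mem_closedBall_zero_iff.1 (hU hy)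
  calc |s| * dist x y + |s - t| * ‖y‖ ≤ 1 * ρ + (b - a) * h := by
        gcongr
        linarith [abs_nonneg (s - t)]
    _ = ρ + (b - a) * h := by ring

theorem Icc_zero_one_subset_iUnion_Icc {n : ℕ} (hn : n ≠ 0) :
    Icc (0 : ℝ) 1 ⊆ ⋃ j : Fin n, Icc ((j : ℝ) / n) ((j + 1) / n) := by
  rintro t ⟨ht0, ht1⟩
  have hn' : (0 : ℝ) < n := by positivity
  have hk : t * n ≤ (min ⌊t * n⌋₊ (n - 1) : ℕ) + 1 := by
    rcases min_cases ⌊t * n⌋₊ (n - 1) with ⟨hmin, -⟩ | ⟨hmin, hlt⟩ <;> rw [hmin]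
    · exact (Nat.lt_floor_add_one _).le
    · rw [Nat.cast_sub (by omega), Nat.cast_one, sub_add_cancel]
      nlinarith
  refine mem_iUnion.2 ⟨⟨min ⌊t * n⌋₊ (n - 1), by omega⟩, ?_⟩
  rw [mem_Icc, div_le_iff₀ hn', le_div_iff₀ hn']
  exact ⟨(Nat.cast_le.2 (min_le_left _ _)).trans (Nat.floor_le (by positivity)), hk⟩

theorem exists_cover_Icc_smul_of_dist_le {h ρ : ℝ} {U : Set E} (hU : U ⊆ closedBall 0 h)
    (hρ : 0 < ρ) (hρh : ρ ≤ h) (hUρ : ∀ x ∈ U, ∀ y ∈ U, dist x y ≤ ρ) :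
    ∃ n : ℕ, n * ρ ≤ 2 * h ∧ ∃ W : Fin n → Set E,
      Icc (0 : ℝ) 1 • U ⊆ ⋃ j, W j ∧ ∀ j, ediam (W j) ≤ ENNReal.ofReal (2 * ρ) := by
  set n := ⌈h / ρ⌉₊
  have hhρ : 0 < h / ρ := div_pos (hρ.trans_le hρh) hρ
  have hn : n ≠ 0 := (Nat.ceil_pos.2 hhρ).ne'
  have hn' : (0 : ℝ) < n := by positivity
  have hhn : h / n ≤ ρ := by
    rw [div_le_iff₀ hn', mul_comm, ← div_le_iff₀ hρ]
    exact Nat.le_ceil _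
  refine ⟨n, ?_, fun j => Icc ((j : ℝ) / n) ((j + 1) / n) • U, ?_, fun j => ?_⟩
  · calc n * ρ ≤ (h / ρ + 1) * ρ := by gcongr; exact (Nat.ceil_lt_add_one hhρ.le).le
      _ = h + ρ := by field_simp
      _ ≤ 2 * h := by linarith
  · rw [← iUnion_smul]
    exact smul_subset_smul_right (Icc_zero_one_subset_iUnion_Icc hn)
  · have hj : (j : ℝ) + 1 ≤ n := by exact_mod_cast j.isLt
    refine (ediam_Icc_smul_le (by positivity) ?_ hU hUρ).trans (ENNReal.ofReal_le_ofReal ?_)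
    · rwa [div_le_one hn']
    · calc ρ + ((j + 1) / n - j / n) * h = ρ + h / n := by ring
        _ ≤ 2 * ρ := by linarith

theorem exists_cover_Icc_smul_sum_le (m : ℕ) {h ρ : ℝ} {U : Set E} (hU : U ⊆ closedBall 0 h)
    (hρ : 0 < ρ) (hρh : ρ ≤ h) (hUρ : ∀ x ∈ U, ∀ y ∈ U, dist x y ≤ ρ) :
    ∃ (n : ℕ) (W : Fin n → Set E), Icc (0 : ℝ) 1 • U ⊆ ⋃ j, W j ∧
      (∀ j, ediam (W j) ≤ ENNReal.ofReal (2 * ρ)) ∧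
      ∑ j, ediam (W j) ^ ((m : ℝ) + 1) ≤ ENNReal.ofReal (2 ^ (m + 2) * h * ρ ^ m) := by
  obtain ⟨n, hn, W, hcov, hdiam⟩ := exists_cover_Icc_smul_of_dist_le hU hρ hρh hUρ
  refine ⟨n, W, hcov, hdiam, ?_⟩
  have hexp : (m : ℝ) + 1 = (m + 1 : ℕ) := by push_cast; rfl
  calc ∑ j, ediam (W j) ^ ((m : ℝ) + 1)
      ≤ ∑ _j : Fin n, ENNReal.ofReal ((2 * ρ) ^ (m + 1)) := by
        gcongr with j
        rw [hexp, ENNReal.rpow_natCast, ENNReal.ofReal_pow (by positivity)]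
        exact pow_le_pow_left₀ zero_le (hdiam j) _
    _ = ENNReal.ofReal (n * (2 * ρ) ^ (m + 1)) := by
        rw [Finset.sum_const, Finset.card_univ, Fintype.card_fin, nsmul_eq_mul,
          ENNReal.ofReal_mul (by positivity), ENNReal.ofReal_natCast]
    _ ≤ ENNReal.ofReal (2 ^ (m + 2) * h * ρ ^ m) := by
        refine ENNReal.ofReal_le_ofReal ?_
        calc n * (2 * ρ) ^ (m + 1) = 2 ^ (m + 1) * ρ ^ m * (n * ρ) := by ring
          _ ≤ 2 ^ (m + 1) * ρ ^ m * (2 * h) := by gcongr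
          _ = 2 ^ (m + 2) * h * ρ ^ m := by ring

theorem exists_cover_Icc_smul_tsum_le {m : ℕ} (hm : m ≠ 0) {B : Set E} {h r : ℝ}
    (hB : B ⊆ closedBall 0 h) (hr : 0 < r) (hrh : r ≤ h) (hr1 : r ≤ 1) {t : ℕ → Set E}
    (hBt : B ⊆ ⋃ i, t i) (htr : ∀ i, ediam (t i) ≤ ENNReal.ofReal r) {η : ℕ → ℝ≥0}
    (hη : ∀ i, 0 < η i) :
    ∃ (ι : Type) (_ : Countable ι) (W : ι → Set E), Icc (0 : ℝ) 1 • B ⊆ ⋃ k, W k ∧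
      (∀ k, ediam (W k) ≤ ENNReal.ofReal (2 * r)) ∧
      ∑' k, ediam (W k) ^ ((m : ℝ) + 1) ≤
        ENNReal.ofReal (2 ^ (m + 2) * h) * ∑' i, (ediam (t i) ^ m + η i) := by
  choose ρ hρ hρr hρdist hρpow using
    fun i => exists_dist_le_pow_le_ediam_pow_add hm hr hr1 (htr i) (hη i)
  choose n W hcov hdiam hsum using fun i => exists_cover_Icc_smul_sum_le m
    (inter_subset_right.trans hB) (hρ i) ((hρr i).trans hrh)
    (fun x hx y hy => hρdist i x (inter_subset_left hx) y (inter_subset_left hy))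
  refine ⟨Σ i, Fin (n i), inferInstance, fun k => W k.1 k.2, ?_,
    fun k => (hdiam k.1 k.2).trans (ENNReal.ofReal_le_ofReal (by linarith [hρr k.1])), ?_⟩
  · calc Icc (0 : ℝ) 1 • B ⊆ Icc (0 : ℝ) 1 • ⋃ i, t i ∩ B := by
          gcongr
          rw [← iUnion_inter]
          exact subset_inter hBt subset_rfl
      _ = ⋃ i, Icc (0 : ℝ) 1 • (t i ∩ B) := smul_iUnion _ _
      _ ⊆ ⋃ k : Σ i, Fin (n i), W k.1 k.2 := by
          rw [iUnion_sigma]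
          exact iUnion_mono hcov
  · calc ∑' k : Σ i, Fin (n i), ediam (W k.1 k.2) ^ ((m : ℝ) + 1)
        = ∑' i, ∑ j, ediam (W i j) ^ ((m : ℝ) + 1) := by
          rw [ENNReal.tsum_sigma']
          simp only [tsum_fintype]
      _ ≤ ∑' i, ENNReal.ofReal (2 ^ (m + 2) * h) * (ediam (t i) ^ m + η i) := by
          refine ENNReal.tsum_le_tsum fun i => (hsum i).trans ?_
          rw [ENNReal.ofReal_mul (by have := hr.trans_le hrh; positivity)]
          gcongr
          exact hρpow i
      _ = _ := ENNReal.tsum_mul_left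

theorem hausdorffMeasure_Icc_smul_le [MeasurableSpace E] [BorelSpace E] {l : ℕ} (hl : l ≠ 0)
    {B : Set E} {h : ℝ} (hh : 0 < h) (hB : B ⊆ closedBall 0 h) :
    μH[(l : ℝ) + 1] (Icc (0 : ℝ) 1 • B) ≤ ENNReal.ofReal (2 ^ (l + 2) * h) * μH[l] B := by
  refine ENNReal.le_mul_of_forall_lt (.inl (ENNReal.ofReal_pos.2 (by positivity)).ne')
    (.inl ENNReal.ofReal_ne_top) fun K hK c hc => ?_
  refine (hausdorffMeasure_le_of_forall_cover fun r hr => ?_).trans (by gcongr)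
  set r' := min (r / 2) (min h 1)
  have hr' : 0 < r' := lt_min (by positivity) (lt_min hh one_pos)
  obtain ⟨t, hBt, htr, htsum⟩ :=
    exists_cover_tsum_ediam_rpow_lt (by positivity) hc (ENNReal.ofReal_pos.2 hr')
  obtain ⟨η, hη, hηsum⟩ := ENNReal.exists_pos_sum_of_countable (tsub_pos_of_lt htsum).ne' ℕ
  obtain ⟨ι, hι, W, hcov, hdiam, hWsum⟩ := exists_cover_Icc_smul_tsum_le hl hB hr'
    ((min_le_right _ _).trans (min_le_left _ _)) ((min_le_right _ _).trans (min_le_right _ _))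
    hBt htr hη
  have hslack : ∑' i, (ediam (t i) ^ l + η i) ≤ c :=
    calc ∑' i, (ediam (t i) ^ l + η i) = ∑' i, ediam (t i) ^ (l : ℝ) + ∑' i, (η i : ℝ≥0∞) := by
          simp only [ENNReal.tsum_add, ENNReal.rpow_natCast]
      _ ≤ ∑' i, ediam (t i) ^ (l : ℝ) + (c - ∑' i, ediam (t i) ^ (l : ℝ)) := by gcongr
      _ = c := add_tsub_cancel_of_le htsum.le
  refine ⟨ι, hι, W, hcov, fun k => (hdiam k).trans (ENNReal.ofReal_le_ofReal ?_),
    hWsum.trans (by gcongr)⟩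
  linarith [min_le_left (r / 2) (min h 1)]

end Cone

theorem stmt7_general (N l : ℕ) (hl : 1 ≤ l) :
    ∃ C : ℝ, 0 < C ∧
      ∀ (B : Set (EuclideanSpace ℝ (Fin (N + 1)))) (h : ℝ), 0 < h →
        IsCompact B → B ⊆ Metric.closedBall 0 h → μH[(l : ℝ)] B < ⊤ →
        μH[(l + 1 : ℝ)] {y | ∃ x ∈ B, ∃ t ∈ Set.Icc (0 : ℝ) 1, y = t • x}
          ≤ ENNReal.ofReal (C * h) * μH[(l : ℝ)] B := by
  refine ⟨2 ^ (l + 2), by positivity, fun B h hh _ hB _ => ?_⟩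
  have hcone : {y | ∃ x ∈ B, ∃ t ∈ Icc (0 : ℝ) 1, y = t • x} = Icc (0 : ℝ) 1 • B := by
    ext y
    simp only [Set.mem_ofPred_eq, Set.mem_smul, eq_comm (a := y)]
    constructor <;> rintro ⟨a, ha, b, hb, hy⟩ <;> exact ⟨b, hb, a, ha, hy⟩
  rw [hcone]
  exact hausdorffMeasure_Icc_smul_le (by omega) hh hB

/-- Cone area bound: for a compact set `B ⊆ ℝ^{N+1}` contained in the closed ball of
radius `h` with `ℋ^l(B) < ∞`, the cone `V = {t•x : x ∈ B, t ∈ [0,1]}` satisfies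
`ℋ^{l+1}(V) ≤ C · h · ℋ^l(B)`, with `C` depending only on `l` and `N`. -/
theorem stmt7 (N l : ℕ) (hN : 2 ≤ N) (hl : 1 ≤ l) (hlN : l ≤ N - 1) :
    ∃ C : ℝ, 0 < C ∧
      ∀ (B : Set (EuclideanSpace ℝ (Fin (N + 1)))) (h : ℝ), 0 < h →
        IsCompact B → B ⊆ Metric.closedBall 0 h → μH[(l : ℝ)] B < ⊤ →
        μH[(l + 1 : ℝ)] {y | ∃ x ∈ B, ∃ t ∈ Set.Icc (0 : ℝ) 1, y = t • x}
          ≤ ENNReal.ofReal (C * h) * μH[(l : ℝ)] B :=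
  stmt7_general N l hl
end

section
/- Tilted truncated cone area bound: let B ⊂ ℝ^N be compact with ℋ^l(B) < ∞ and sup_{x∈B}|x| ≤ h, let ε > 0 and 0 < r ≤ inf_{x∈B}|x|, and define D̂ = {(t·x, (1−t)·ε) ∈ ℝ^N × ℝ : x ∈ B, r²/|x|² ≤ t ≤ 1}. Then ℋ^{l+1}(D̂) ≤ C·(h + ε)·ℋ^l(B) for a constant C depending only on l and N. -/
open Metric MeasureTheory

/-! The cone is the image of `B × [0, M]`, `M = h + ε`, under
`(x, s) ↦ ((s / M) • x, (1 - s / M) ε)`, which is `2`-Lipschitz there because `‖x‖ ≤ M` and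
`ε ≤ M`. So it suffices that `ℋ^{d+1}(s × [0, M]) ≤ M ℋ^d(s)`: each set of diameter `δ` in a
nearly optimal `ℋ^d`-cover of `s`, times `[0, M]`, is cut into `⌊M / δ⌋ + 1` slabs of diameter
`δ`, whose `(d+1)`-th powers add up to at most `(M + δ) δ^d`. Sets of diameter zero are first
enlarged to positive scales with summable `d`-th powers. -/

open Set Filter Topology ENNReal

theorem ediam_prod_le {X Y : Type*} [PseudoEMetricSpace X] [PseudoEMetricSpace Y]
    (s : Set X) (t : Set Y) : ediam (s ×ˢ t) ≤ max (ediam s) (ediam t) :=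
  ediam_le fun p hp q hq => by
    rw [Prod.edist_eq]
    exact max_le_max (edist_le_ediam_of_mem hp.1 hq.1) (edist_le_ediam_of_mem hp.2 hq.2)

section Hausdorff

variable {X : Type*} [EMetricSpace X] [MeasurableSpace X] [BorelSpace X] {d : ℝ}

theorem exists_cover_tsum_ediam_rpow_le (hd : 0 < d) {s : Set X} (hs : μH[d] s ≠ ∞)
    {ρ η : ℝ≥0∞} (hρ : 0 < ρ) (hη : η ≠ 0) :
    ∃ t : ℕ → Set X, s ⊆ ⋃ i, t i ∧ (∀ i, ediam (t i) ≤ ρ) ∧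
      ∑' i, ediam (t i) ^ d ≤ μH[d] s + η := by
  have hlt : (⨅ (t : ℕ → Set X) (_ : s ⊆ ⋃ n, t n) (_ : ∀ n, ediam (t n) ≤ ρ),
      ∑' n, ⨆ _ : (t n).Nonempty, ediam (t n) ^ d) < μH[d] s + η := by
    refine lt_of_le_of_lt ?_ (ENNReal.lt_add_right hs hη)
    rw [Measure.hausdorffMeasure_apply]
    exact le_iSup₂_of_le ρ hρ le_rfl
  simp only [iInf_lt_iff] at hlt
  obtain ⟨t, hst, htρ, hsum⟩ := hlt
  refine ⟨t, hst, htρ, le_trans (ENNReal.tsum_le_tsum fun i => ?_) hsum.le⟩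
  rcases (t i).eq_empty_or_nonempty with he | hne
  · simp [he, ENNReal.zero_rpow_of_pos hd]
  · exact le_iSup (fun _ : (t i).Nonempty => ediam (t i) ^ d) hne

end Hausdorff

section Slabs

variable {X : Type*} [PseudoEMetricSpace X]

theorem Icc_subset_iUnion_Icc_nat_mul {δ M : ℝ} (hδ : 0 < δ) :
    Icc 0 M ⊆ ⋃ j ≤ ⌊M / δ⌋₊, Icc (j * δ) ((j + 1) * δ) := by
  intro τ hτ
  refine mem_iUnion₂.2 ⟨⌊τ / δ⌋₊, Nat.floor_le_floor (div_le_div_of_nonneg_right hτ.2 hδ.le),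
    ?_, ?_⟩
  · exact (le_div_iff₀ hδ).1 (Nat.floor_le (div_nonneg hτ.1 hδ.le))
  · exact (div_le_iff₀ hδ).1 (Nat.lt_floor_add_one _).le

theorem exists_cover_prod_Icc_of_ediam_le {d : ℝ} (hd : 0 ≤ d) {t : Set X} {δ M : ℝ}
    (hδ : 0 < δ) (hM : 0 ≤ M) (ht : ediam t ≤ ENNReal.ofReal δ) :
    ∃ u : ℕ → Set (X × ℝ), t ×ˢ Icc 0 M ⊆ ⋃ j, u j ∧
      (∀ j, ediam (u j) ≤ ENNReal.ofReal δ) ∧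
      ∑' j, ediam (u j) ^ (d + 1) ≤ ENNReal.ofReal (M + δ) * ENNReal.ofReal δ ^ d := by
  set K := ⌊M / δ⌋₊
  set u : ℕ → Set (X × ℝ) := fun j => if j ≤ K then t ×ˢ Icc (j * δ) ((j + 1) * δ) else ∅
  have hu_diam : ∀ j, ediam (u j) ≤ ENNReal.ofReal δ := fun j => by
    by_cases hj : j ≤ K
    · simp only [u, if_pos hj]
      refine (ediam_prod_le _ _).trans (max_le ht ?_)
      rw [Real.ediam_Icc]
      exact le_of_eq (congrArg _ (by ring))
    · simp [u, hj]
  refine ⟨u, ?_, hu_diam, ?_⟩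
  · rintro ⟨x, τ⟩ ⟨hx, hτ⟩
    obtain ⟨j, hj, hτj⟩ := mem_iUnion₂.1 (Icc_subset_iUnion_Icc_nat_mul hδ hτ)
    exact mem_iUnion.2 ⟨j, by rw [show u j = _ from if_pos hj]; exact ⟨hx, hτj⟩⟩
  have hδ₀ : ENNReal.ofReal δ ≠ 0 := (ENNReal.ofReal_pos.2 hδ).ne'
  have hKδ : ((K : ℝ) + 1) * δ ≤ M + δ := by
    have := (le_div_iff₀ hδ).1 (Nat.floor_le (div_nonneg hM hδ.le))
    linarith
  calc ∑' j, ediam (u j) ^ (d + 1)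
      = ∑ j ∈ Finset.range (K + 1), ediam (u j) ^ (d + 1) := by
        refine tsum_eq_sum fun j hj => ?_
        have : ¬ j ≤ K := by simpa [Nat.lt_succ_iff] using hj
        simp [u, this, ENNReal.zero_rpow_of_pos (by linarith : 0 < d + 1)]
    _ ≤ ∑ _j ∈ Finset.range (K + 1), ENNReal.ofReal δ ^ (d + 1) :=
        Finset.sum_le_sum fun j _ => ENNReal.rpow_le_rpow (hu_diam j) (by linarith)
    _ = ENNReal.ofReal (((K : ℝ) + 1) * δ) * ENNReal.ofReal δ ^ d := by
        rw [Finset.sum_const, Finset.card_range, nsmul_eq_mul,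
          ENNReal.rpow_add _ _ hδ₀ ENNReal.ofReal_ne_top, ENNReal.rpow_one,
          ENNReal.ofReal_mul (by positivity), ← ENNReal.ofReal_natCast]
        push_cast
        ring
    _ ≤ ENNReal.ofReal (M + δ) * ENNReal.ofReal δ ^ d := by gcongr

end Slabs

section ProductBound

variable {X : Type*} [EMetricSpace X] [MeasurableSpace X] [BorelSpace X] {d : ℝ}

theorem exists_cover_prod_Icc (hd : 0 < d) {s : Set X} (hs : μH[d] s ≠ ∞) {M : ℝ} (hM : 0 ≤ M)
    {η : ℝ≥0∞} (hη₀ : 0 < η) (hη : η ≠ ∞) :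
    ∃ u : ℕ × ℕ → Set (X × ℝ), s ×ˢ Icc 0 M ⊆ ⋃ p, u p ∧
      (∀ p, ediam (u p) ≤ max η (η ^ d⁻¹)) ∧
      ∑' p, ediam (u p) ^ (d + 1) ≤ (ENNReal.ofReal M + max η (η ^ d⁻¹)) * (μH[d] s + 3 * η) := by
  obtain ⟨t, hst, ht_diam, ht_sum⟩ := exists_cover_tsum_ediam_rpow_le hd hs hη₀ hη₀.ne'
  set r := max η (η ^ d⁻¹)
  -- enlarge each `t i` to a positive scale, at a cost `η * 2⁻¹ ^ i` in the `d`-th power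
  set δ : ℕ → ℝ≥0∞ := fun i => max (ediam (t i)) ((η * 2⁻¹ ^ i) ^ d⁻¹)
  have hδ_pos : ∀ i, 0 < δ i := fun i =>
    lt_max_of_lt_right (ENNReal.rpow_pos (ENNReal.mul_pos hη₀.ne' (by simp))
      (ENNReal.mul_ne_top hη (by simp)))
  have hδ_le : ∀ i, δ i ≤ r := fun i =>
    max_le_max (ht_diam i) (ENNReal.rpow_le_rpow (mul_le_of_le_one_right' (pow_le_one₀
      (by simp) (by norm_num))) (inv_nonneg.2 hd.le))
  have hδ_top : ∀ i, δ i ≠ ∞ := fun i =>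
    ((hδ_le i).trans_lt (max_lt hη.lt_top (ENNReal.rpow_lt_top_of_nonneg (by positivity) hη))).ne
  have hδ_pow : ∀ i, δ i ^ d ≤ ediam (t i) ^ d + η * 2⁻¹ ^ i := fun i => by
    rw [ENNReal.max_rpow hd.le, ENNReal.rpow_inv_rpow hd.ne']
    exact max_le le_self_add le_add_self
  have slabs := fun i => exists_cover_prod_Icc_of_ediam_le hd.le
    (ENNReal.toReal_pos (hδ_pos i).ne' (hδ_top i)) hM
    ((le_max_left _ _).trans_eq (ENNReal.ofReal_toReal (hδ_top i)).symm)
  choose u hu_cover hu_diam hu_sum using slabs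
  simp only [ENNReal.ofReal_add hM ENNReal.toReal_nonneg, ENNReal.ofReal_toReal (hδ_top _)]
    at hu_diam hu_sum
  refine ⟨fun p => u p.1 p.2, ?_, fun p => (hu_diam p.1 p.2).trans (hδ_le p.1), ?_⟩
  · rintro ⟨x, τ⟩ ⟨hx, hτ⟩
    obtain ⟨i, hi⟩ := mem_iUnion.1 (hst hx)
    obtain ⟨j, hj⟩ := mem_iUnion.1 (hu_cover i ⟨hi, hτ⟩)
    exact mem_iUnion.2 ⟨(i, j), hj⟩
  calc ∑' p : ℕ × ℕ, ediam (u p.1 p.2) ^ (d + 1)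
      = ∑' i, ∑' j, ediam (u i j) ^ (d + 1) :=
        ENNReal.tsum_prod (f := fun i j => ediam (u i j) ^ (d + 1))
    _ ≤ ∑' i, (ENNReal.ofReal M + r) * (ediam (t i) ^ d + η * 2⁻¹ ^ i) :=
        ENNReal.tsum_le_tsum fun i => (hu_sum i).trans (by gcongr; exacts [hδ_le i, hδ_pow i])
    _ = (ENNReal.ofReal M + r) * (∑' i, ediam (t i) ^ d + 2 * η) := by
        rw [ENNReal.tsum_mul_left, ENNReal.tsum_add, ENNReal.tsum_mul_left,
          ENNReal.tsum_geometric, ENNReal.one_sub_inv_two, inv_inv, mul_comm η]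
    _ ≤ (ENNReal.ofReal M + r) * (μH[d] s + η + 2 * η) := by gcongr
    _ = (ENNReal.ofReal M + r) * (μH[d] s + 3 * η) := by ring

theorem hausdorffMeasure_prod_Icc_le (hd : 0 < d) (s : Set X) {M : ℝ} (hM : 0 < M) :
    μH[d + 1] (s ×ˢ Icc 0 M) ≤ ENNReal.ofReal M * μH[d] s := by
  rcases eq_or_ne (μH[d] s) ∞ with hs | hs
  · simp [hs, ENNReal.mul_top, hM]
  set r : ℝ≥0∞ → ℝ≥0∞ := fun η => max η (η ^ d⁻¹)
  have hr : Tendsto r (𝓝[>] 0) (𝓝 0) := by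
    have : Continuous r := continuous_id.max ENNReal.continuous_rpow_const
    simpa [r, ENNReal.zero_rpow_of_pos (inv_pos.2 hd)] using
      (this.tendsto 0).mono_left nhdsWithin_le_nhds
  have hbound : Tendsto (fun η => (ENNReal.ofReal M + r η) * (μH[d] s + 3 * η)) (𝓝[>] 0)
      (𝓝 (ENNReal.ofReal M * μH[d] s)) := by
    have h₁ : Tendsto (fun η => ENNReal.ofReal M + r η) (𝓝[>] 0) (𝓝 (ENNReal.ofReal M)) := by
      simpa using tendsto_const_nhds.add hr
    have h₂ : Tendsto (fun η : ℝ≥0∞ => μH[d] s + 3 * η) (𝓝[>] 0) (𝓝 (μH[d] s)) := by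
      simpa using tendsto_const_nhds.add
        ((ENNReal.Tendsto.const_mul (a := 3) (tendsto_id (x := 𝓝 0)) (Or.inr (by simp))).mono_left
          nhdsWithin_le_nhds)
    exact ENNReal.Tendsto.mul h₁ (Or.inr hs) h₂ (Or.inr ENNReal.ofReal_ne_top)
  have hcover := fun η (hη : η ∈ Ioo (0 : ℝ≥0∞) ∞) => exists_cover_prod_Icc hd hs hM.le hη.1 hη.2.ne
  choose! u hu_cover hu_diam hu_sum using hcover
  have hη : Ioo (0 : ℝ≥0∞) ∞ ∈ 𝓝[>] 0 := Ioo_mem_nhdsGT ENNReal.zero_lt_top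
  calc μH[d + 1] (s ×ˢ Icc 0 M)
      ≤ liminf (fun η => ∑' p, ediam (u η p) ^ (d + 1)) (𝓝[>] 0) :=
        Measure.hausdorffMeasure_le_liminf_tsum _ _ r hr u (eventually_of_mem hη hu_diam)
          (eventually_of_mem hη hu_cover)
    _ ≤ liminf (fun η => (ENNReal.ofReal M + r η) * (μH[d] s + 3 * η)) (𝓝[>] 0) :=
        liminf_le_liminf (eventually_of_mem hη hu_sum)
    _ = ENNReal.ofReal M * μH[d] s := hbound.liminf_eq

end ProductBound

section TiltedCone

variable {E : Type*} [SeminormedAddCommGroup E] [NormedSpace ℝ E]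

noncomputable def tiltedConeMap (M ε : ℝ) (p : E × ℝ) : E × ℝ :=
  ((p.2 / M) • p.1, (1 - p.2 / M) * ε)

theorem lipschitzOnWith_tiltedConeMap {s : Set E} {M ε : ℝ} (hM : 0 < M)
    (hs : ∀ x ∈ s, ‖x‖ ≤ M) (hε : 0 ≤ ε) (hεM : ε ≤ M) :
    LipschitzOnWith 2 (tiltedConeMap M ε) (s ×ˢ Icc 0 M) := by
  rw [lipschitzOnWith_iff_dist_le_mul]
  rintro ⟨x₁, τ₁⟩ ⟨-, hτ₁⟩ ⟨x₂, τ₂⟩ ⟨hx₂, -⟩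
  have hx : dist x₁ x₂ ≤ dist (x₁, τ₁) (x₂, τ₂) := le_max_left _ _
  have hτ : dist τ₁ τ₂ ≤ dist (x₁, τ₁) (x₂, τ₂) := le_max_right _ _
  have hτ_scaled : |τ₁ - τ₂| / M * M = dist τ₁ τ₂ := by
    rw [div_mul_cancel₀ _ hM.ne', Real.dist_eq]
  rw [Prod.dist_eq, NNReal.coe_ofNat]
  refine max_le ?_ ?_ <;> simp only [tiltedConeMap]
  · have hsplit : (τ₁ / M) • x₁ - (τ₂ / M) • x₂ = (τ₁ / M) • (x₁ - x₂) + ((τ₁ - τ₂) / M) • x₂ := by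
      module
    have h₁ : ‖(τ₁ / M) • (x₁ - x₂)‖ ≤ dist x₁ x₂ := by
      rw [norm_smul, ← dist_eq_norm, Real.norm_of_nonneg (div_nonneg hτ₁.1 hM.le)]
      exact mul_le_of_le_one_left dist_nonneg ((div_le_one hM).2 hτ₁.2)
    have h₂ : ‖((τ₁ - τ₂) / M) • x₂‖ ≤ dist τ₁ τ₂ := by
      rw [norm_smul, Real.norm_eq_abs, abs_div, abs_of_pos hM, ← hτ_scaled]
      gcongr
      exact hs x₂ hx₂
    calc dist ((τ₁ / M) • x₁) ((τ₂ / M) • x₂) ≤ dist x₁ x₂ + dist τ₁ τ₂ := by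
          rw [dist_eq_norm, hsplit]; exact (norm_add_le _ _).trans (add_le_add h₁ h₂)
      _ ≤ 2 * dist (x₁, τ₁) (x₂, τ₂) := by linarith
  · calc dist ((1 - τ₁ / M) * ε) ((1 - τ₂ / M) * ε) = |τ₁ - τ₂| / M * ε := by
          rw [Real.dist_eq, show (1 - τ₁ / M) * ε - (1 - τ₂ / M) * ε = (τ₂ - τ₁) / M * ε by ring,
            abs_mul, abs_div, abs_of_pos hM, abs_of_nonneg hε, abs_sub_comm]
      _ ≤ dist τ₁ τ₂ := by rw [← hτ_scaled]; gcongr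
      _ ≤ 2 * dist (x₁, τ₁) (x₂, τ₂) := by linarith [dist_nonneg (x := τ₁) (y := τ₂)]

end TiltedCone

theorem stmt16_general (N l : ℕ) (hl : 1 ≤ l) :
    ∃ C : ℝ, 0 < C ∧
      ∀ (B : Set (EuclideanSpace ℝ (Fin N))) (h ε r : ℝ),
        IsCompact B → (0 : EuclideanSpace ℝ (Fin N)) ∉ B →
        μH[(l : ℝ)] B < ⊤ → (∀ x ∈ B, ‖x‖ ≤ h) → 0 < ε → 0 < r →
        (∀ x ∈ B, r ≤ ‖x‖) →
        μH[(l + 1 : ℝ)]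
          {y : EuclideanSpace ℝ (Fin N) × ℝ |
            ∃ x ∈ B, ∃ t ∈ Set.Icc (r ^ 2 / ‖x‖ ^ 2) (1 : ℝ),
              y = (t • x, (1 - t) * ε)}
          ≤ ENNReal.ofReal (C * (h + ε)) * μH[(l : ℝ)] B := by
  refine ⟨2 ^ (l + 1), by positivity, fun B h ε r _ _ _ hBh hε _ _ => ?_⟩
  rcases B.eq_empty_or_nonempty with rfl | ⟨x₀, hx₀⟩
  · simp
  have hh : 0 ≤ h := (norm_nonneg x₀).trans (hBh x₀ hx₀)
  have hM : 0 < h + ε := by linarith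
  have hcone : {y : EuclideanSpace ℝ (Fin N) × ℝ | ∃ x ∈ B, ∃ t ∈ Set.Icc (r ^ 2 / ‖x‖ ^ 2) 1,
      y = (t • x, (1 - t) * ε)} ⊆ tiltedConeMap (h + ε) ε '' (B ×ˢ Icc 0 (h + ε)) := by
    rintro _ ⟨x, hx, t, ht, rfl⟩
    have ht₀ : 0 ≤ t := (by positivity : 0 ≤ r ^ 2 / ‖x‖ ^ 2).trans ht.1
    refine ⟨(x, t * (h + ε)), ⟨hx, by positivity, by nlinarith [ht.2]⟩, ?_⟩
    simp [tiltedConeMap, hM.ne']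
  have hlip := lipschitzOnWith_tiltedConeMap hM (fun x hx => (hBh x hx).trans (by linarith))
    hε.le (by linarith)
  calc _ ≤ μH[(l + 1 : ℝ)] (tiltedConeMap (h + ε) ε '' (B ×ˢ Icc 0 (h + ε))) := measure_mono hcone
    _ ≤ 2 ^ ((l : ℝ) + 1) * μH[(l + 1 : ℝ)] (B ×ˢ Icc 0 (h + ε)) := by
        simpa only [ENNReal.coe_ofNat] using
          hlip.hausdorffMeasure_image_le (d := (l : ℝ) + 1) (by positivity)
    _ ≤ 2 ^ ((l : ℝ) + 1) * (ENNReal.ofReal (h + ε) * μH[(l : ℝ)] B) := by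
        gcongr
        exact hausdorffMeasure_prod_Icc_le (by exact_mod_cast hl) B hM
    _ = ENNReal.ofReal (2 ^ (l + 1) * (h + ε)) * μH[(l : ℝ)] B := by
        rw [ENNReal.ofReal_mul (by positivity), ← mul_assoc]
        norm_cast

/-- Tilted truncated cone area bound: for compact `B ⊆ ℝ^N` with `ℋ^l(B) < ∞`,
`0 ∉ B`, `sup_{x∈B} ‖x‖ ≤ h`, `ε > 0`, and `0 < r ≤ ‖x‖` on `B`, the set
`D̂ = {(t•x, (1-t)ε) : x ∈ B, r²/‖x‖² ≤ t ≤ 1}` satisfies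
`ℋ^{l+1}(D̂) ≤ C (h + ε) ℋ^l(B)` for a constant `C` depending only on `l`, `N`. -/
theorem stmt16 (N l : ℕ) (hN : 2 ≤ N) (hl : 1 ≤ l) (hlN : l ≤ N - 1) :
    ∃ C : ℝ, 0 < C ∧
      ∀ (B : Set (EuclideanSpace ℝ (Fin N))) (h ε r : ℝ),
        IsCompact B → (0 : EuclideanSpace ℝ (Fin N)) ∉ B →
        μH[(l : ℝ)] B < ⊤ → (∀ x ∈ B, ‖x‖ ≤ h) → 0 < ε → 0 < r →
        (∀ x ∈ B, r ≤ ‖x‖) →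
        μH[(l + 1 : ℝ)]
          {y : EuclideanSpace ℝ (Fin N) × ℝ |
            ∃ x ∈ B, ∃ t ∈ Set.Icc (r ^ 2 / ‖x‖ ^ 2) (1 : ℝ),
              y = (t • x, (1 - t) * ε)}
          ≤ ENNReal.ofReal (C * (h + ε)) * μH[(l : ℝ)] B :=
  stmt16_general N l hl
end
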